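/- With A the quantum complete intersection as below: (i) the set {x^i y^j : 0 ≤ i,j ≤ p−1, (e divides both i and j) or i = p−1 or j = p−1} is a k-basis of the center Z(A); in particular dim_k Z(A) = ((p−1)/e)² + 2p − 1; (ii) the socle of Z(A), i.e. soc(Z(A)) = {z ∈ Z(A) : z·m = 0 for all m in the maximal ideal J(A) ∩ Z(A) of Z(A)}, has k-basis {x^i y^{p−1}, x^{p−1} y^j : p−e ≤ i, j ≤ p−1}, so dim_k soc(Z(A)) = 2e − 1; (iii) J(A) ∩ Z(A) ⊆ J(A)^e. -/

import Mathlib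

/-!
The relation `y x = q x y` gives `x · x^i y^j = x^{i+1} y^j` but `x^i y^j · x = q^j x^{i+1} y^j`,
and similarly for `y`. Comparing coefficients in the monomial basis, a central element can only
involve monomials with `q^i = q^j = 1` (i.e. `e ∣ i` and `e ∣ j`) or with `x^{i+1} = 0` or
`y^{j+1} = 0`, and these monomials are central.

Let `F_d` be the span of the monomials of total degree `≥ d`. Then `F_a F_c ⊆ F_{a+c}` and
`F_{2p-1} = 0`, so `F_1` is a nil ideal of codimension one, hence `F_1 = J(A)`. A nonconstant
central monomial has degree `≥ e`, so `J(A) ∩ Z(A) ⊆ F_e ⊆ F_1^e = J(A)^e`. A socle element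
is killed by the central elements `x^e, y^e ∈ J(A)`, which forces its monomials into the corner
`i, j ≥ p - e`; conversely such central monomials lie in `F_{2p-1-e}` and `F_{2p-1-e} F_e = 0`.
-/

/-- The socle of the (local, commutative) center `Z(A)`, i.e. the set of central elements
annihilated by the maximal ideal `J(A) ∩ Z(A)` of `Z(A)`. -/
def socCenter (k : Type*) [CommRing k] (A : Type*) [Ring A] [Algebra k A] :
    Submodule k A where
  carrier := {z | z ∈ Subalgebra.center k A ∧
    ∀ m ∈ Subalgebra.center k A, m ∈ Ideal.jacobson (⊥ : Ideal A) → z * m = 0}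
  add_mem' := by
    rintro a b ⟨haZ, ha⟩ ⟨hbZ, hb⟩
    exact ⟨Subalgebra.add_mem _ haZ hbZ, fun m hmZ hmJ => by
      rw [add_mul, ha m hmZ hmJ, hb m hmZ hmJ, add_zero]⟩
  zero_mem' := ⟨Subalgebra.zero_mem _, fun m _ _ => zero_mul m⟩
  smul_mem' := by
    rintro c a ⟨haZ, ha⟩
    exact ⟨Subalgebra.smul_mem _ haZ c, fun m hmZ hmJ => by
      rw [smul_mul_assoc, ha m hmZ hmJ, smul_zero]⟩

theorem Ideal.mem_jacobson_bot_of_isNilpotent_mul {R : Type*} [Ring R] {z : R}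
    (h : ∀ a, IsNilpotent (a * z)) : z ∈ Ideal.jacobson (⊥ : Ideal R) := by
  refine Ideal.mem_jacobson_iff.2 fun a => ?_
  obtain ⟨u, hu⟩ := (h a).isUnit_add_one
  refine ⟨↑u⁻¹, ?_⟩
  rw [Submodule.mem_bot, mul_assoc, ← mul_add_one, ← hu, Units.inv_mul, sub_self]

theorem Module.Basis.finrank_span_image {ι R M : Type*} [Ring R] [Nontrivial R]
    [StrongRankCondition R] [AddCommGroup M] [Module R M] [Finite ι] (b : Module.Basis ι R M)
    (s : Set ι) :
    Module.finrank R (Submodule.span R (b '' s)) = s.ncard := by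
  classical
  have := Fintype.ofFinite ι
  rw [finrank_span_set_eq_card (b.linearIndependent.linearIndepOn s).id_image, Set.toFinset_card,
    Fintype.card_eq_nat_card, Nat.card_coe_set_eq, Set.ncard_image_of_injective s b.injective]

theorem Finset.card_product_singleton_union_singleton_product {α : Type*} [DecidableEq α]
    {s : Finset α} {a : α} (ha : a ∈ s) :
    (s ×ˢ {a} ∪ {a} ×ˢ s).card = 2 * s.card - 1 := by
  have h := card_union_add_card_inter (s ×ˢ {a}) ({a} ×ˢ s)
  have hinter : s ×ˢ {a} ∩ {a} ×ˢ s = {(a, a)} := by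
    ext ⟨u, v⟩
    simp only [mem_inter, mem_product, mem_singleton, Prod.mk.injEq]
    constructor
    · rintro ⟨⟨-, rfl⟩, rfl, -⟩
      exact ⟨rfl, rfl⟩
    · rintro ⟨rfl, rfl⟩
      exact ⟨⟨ha, rfl⟩, rfl, ha⟩
  rw [hinter, card_product, card_product, card_singleton, card_singleton, mul_one, one_mul] at h
  have := card_pos.2 ⟨a, ha⟩
  omega

theorem Nat.card_filter_dvd_range {e n : ℕ} (he : 0 < e) (h : e ∣ n) :
    ((Finset.range n).filter (e ∣ ·)).card = n / e := by
  obtain ⟨m, rfl⟩ := h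
  have : {i ∈ Finset.range (e * m) | e ∣ i} =
      (Finset.range m).map ⟨(e * ·), mul_right_injective₀ he.ne'⟩ := by
    ext i
    simp only [Finset.mem_filter, Finset.mem_range, Finset.mem_map, Function.Embedding.coeFn_mk]
    constructor
    · rintro ⟨hi, c, rfl⟩
      exact ⟨c, Nat.lt_of_mul_lt_mul_left hi, rfl⟩
    · rintro ⟨c, hc, rfl⟩
      exact ⟨Nat.mul_lt_mul_of_pos_left hc he, dvd_mul_right e c⟩
  rw [this, Finset.card_map, Finset.card_range, Nat.mul_div_cancel_left m he]

namespace QuantumCompleteIntersection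

open Submodule

def centerIndices (p e : ℕ) : Set (Fin p × Fin p) :=
  {ij | (e ∣ ij.1 ∧ e ∣ ij.2) ∨ (ij.1 : ℕ) = p - 1 ∨ (ij.2 : ℕ) = p - 1}

def socleIndices (p e : ℕ) : Set (Fin p × Fin p) :=
  {ij | (p - e ≤ ij.1 ∧ (ij.2 : ℕ) = p - 1) ∨ ((ij.1 : ℕ) = p - 1 ∧ p - e ≤ ij.2)}

variable {k A : Type*} [Ring A] {p : ℕ} {x y : A}

section CommRing

variable [CommRing k] [Algebra k A] {q : k}

theorem mul_pow_eq_smul (hyx : y * x = q • (x * y)) (i : ℕ) :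
    y * x ^ i = q ^ i • (x ^ i * y) := by
  induction i with
  | zero => simp
  | succ n ih =>
    rw [pow_succ, ← mul_assoc, ih, smul_mul_assoc, mul_assoc, hyx, mul_smul_comm, smul_smul,
      ← pow_succ, ← mul_assoc, ← pow_succ]

theorem pow_mul_pow_eq_smul (hyx : y * x = q • (x * y)) (i j : ℕ) :
    y ^ j * x ^ i = q ^ (i * j) • (x ^ i * y ^ j) := by
  induction j with
  | zero => simp
  | succ n ih =>
    rw [pow_succ, mul_assoc, mul_pow_eq_smul hyx, mul_smul_comm, ← mul_assoc, ih,
      smul_mul_assoc, smul_smul, mul_assoc, ← pow_succ, ← pow_add, add_comm i, ← Nat.mul_succ]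

theorem monomial_mul_monomial (hyx : y * x = q • (x * y)) (i j a c : ℕ) :
    x ^ i * y ^ j * (x ^ a * y ^ c) = q ^ (a * j) • (x ^ (i + a) * y ^ (j + c)) := by
  rw [mul_assoc, ← mul_assoc (y ^ j), pow_mul_pow_eq_smul hyx, smul_mul_assoc, mul_smul_comm,
    ← mul_assoc, ← mul_assoc, ← pow_add, mul_assoc, ← pow_add]

theorem monomial_eq_zero (hx : x ^ p = 0) (hy : y ^ p = 0) {i j : ℕ} (h : p ≤ i ∨ p ≤ j) :
    x ^ i * y ^ j = 0 := by
  rcases h with h | h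
  · rw [pow_eq_zero_of_le h hx, zero_mul]
  · rw [pow_eq_zero_of_le h hy, mul_zero]

variable (k x y) in
def degreeFiltration (d : ℕ) : Submodule k A :=
  span k {a | ∃ i j : ℕ, d ≤ i + j ∧ a = x ^ i * y ^ j}

theorem monomial_mem_degreeFiltration {d i j : ℕ} (h : d ≤ i + j) :
    x ^ i * y ^ j ∈ degreeFiltration k x y d :=
  subset_span ⟨i, j, h, rfl⟩

theorem degreeFiltration_mul_le (hyx : y * x = q • (x * y)) (d d' : ℕ) :
    degreeFiltration k x y d * degreeFiltration k x y d' ≤ degreeFiltration k x y (d + d') := by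
  rw [degreeFiltration, degreeFiltration, span_mul_span, span_le]
  rintro _ ⟨_, ⟨i, j, hij, rfl⟩, _, ⟨a, c, hac, rfl⟩, rfl⟩
  show x ^ i * y ^ j * (x ^ a * y ^ c) ∈ _
  rw [monomial_mul_monomial hyx]
  exact smul_mem _ _ (monomial_mem_degreeFiltration (by omega))

theorem degreeFiltration_eq_bot (hx : x ^ p = 0) (hy : y ^ p = 0) {d : ℕ} (hd : 2 * p - 1 ≤ d) :
    degreeFiltration k x y d = ⊥ := by
  rw [degreeFiltration, span_eq_bot]
  rintro _ ⟨i, j, hij, rfl⟩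
  exact monomial_eq_zero hx hy (by omega)

theorem degreeFiltration_one_pow_le (hyx : y * x = q • (x * y)) (n : ℕ) :
    degreeFiltration k x y 1 ^ n ≤ degreeFiltration k x y n := by
  induction n with
  | zero =>
    rw [Submodule.pow_zero, one_eq_span, span_le, Set.singleton_subset_iff]
    simpa using monomial_mem_degreeFiltration (k := k) (x := x) (y := y) (le_refl (0 + 0))
  | succ n ih =>
    exact (mul_le_mul' ih le_rfl).trans (degreeFiltration_mul_le hyx n 1)

theorem isNilpotent_of_mem_degreeFiltration_one (hx : x ^ p = 0) (hy : y ^ p = 0)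
    (hyx : y * x = q • (x * y)) {z : A} (hz : z ∈ degreeFiltration k x y 1) :
    IsNilpotent z := by
  refine ⟨2 * p - 1, ?_⟩
  have := degreeFiltration_one_pow_le hyx (2 * p - 1) (pow_mem_pow _ hz _)
  rwa [degreeFiltration_eq_bot hx hy le_rfl, mem_bot] at this

theorem monomial_mem_degreeFiltration_one_pow {n i j : ℕ} (h : n + 1 ≤ i + j) :
    x ^ i * y ^ j ∈ degreeFiltration k x y 1 ^ (n + 1) := by
  induction n generalizing i j with
  | zero => simpa using monomial_mem_degreeFiltration h
  | succ n ih =>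
    have hx1 : x ∈ degreeFiltration k x y 1 := by
      simpa using monomial_mem_degreeFiltration (k := k) (x := x) (y := y) (i := 1) (j := 0) le_rfl
    have hy1 : y ∈ degreeFiltration k x y 1 := by
      simpa using monomial_mem_degreeFiltration (k := k) (x := x) (y := y) (i := 0) (j := 1) le_rfl
    rcases Nat.eq_zero_or_pos i with rfl | hi
    · obtain ⟨j, rfl⟩ : ∃ j', j = j' + 1 := ⟨j - 1, by omega⟩
      rw [pow_succ y, ← mul_assoc, Submodule.pow_succ]
      exact mul_mem_mul (ih (by omega)) hy1
    · obtain ⟨i, rfl⟩ : ∃ i', i = i' + 1 := ⟨i - 1, by omega⟩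
      rw [pow_succ' x, mul_assoc, Submodule.pow_succ' _ n.succ_ne_zero]
      exact mul_mem_mul hx1 (ih (by omega))

theorem degreeFiltration_le_one_pow {n : ℕ} (hn : n ≠ 0) :
    degreeFiltration k x y n ≤ degreeFiltration k x y 1 ^ n := by
  obtain ⟨n, rfl⟩ := Nat.exists_eq_succ_of_ne_zero hn
  rw [degreeFiltration, span_le]
  rintro _ ⟨i, j, h, rfl⟩
  exact monomial_mem_degreeFiltration_one_pow h

section Basis

variable {b : Module.Basis (Fin p × Fin p) k A}

theorem image_basis_setOf (hb : ∀ ij : Fin p × Fin p, b ij = x ^ (ij.1 : ℕ) * y ^ (ij.2 : ℕ))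
    (P : ℕ → ℕ → Prop) :
    b '' {ij | P ij.1 ij.2} =
      {a | ∃ i j : ℕ, i < p ∧ j < p ∧ P i j ∧ a = x ^ i * y ^ j} := by
  ext a
  constructor
  · rintro ⟨ij, hij, rfl⟩
    exact ⟨ij.1, ij.2, ij.1.isLt, ij.2.isLt, hij, hb ij⟩
  · rintro ⟨i, j, hi, hj, hij, rfl⟩
    exact ⟨(⟨i, hi⟩, ⟨j, hj⟩), hij, hb _⟩

theorem degreeFiltration_eq_span_image (hx : x ^ p = 0) (hy : y ^ p = 0)
    (hb : ∀ ij : Fin p × Fin p, b ij = x ^ (ij.1 : ℕ) * y ^ (ij.2 : ℕ)) (d : ℕ) :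
    degreeFiltration k x y d = span k (b '' {ij | d ≤ ij.1 + ij.2}) := by
  rw [image_basis_setOf hb (fun i j => d ≤ i + j), degreeFiltration]
  refine le_antisymm (span_le.2 ?_) (span_mono ?_)
  · rintro _ ⟨i, j, hij, rfl⟩
    by_cases h : i < p ∧ j < p
    · exact subset_span ⟨i, j, h.1, h.2, hij, rfl⟩
    · rw [monomial_eq_zero hx hy (by omega)]
      exact zero_mem _
  · rintro _ ⟨i, j, -, -, hij, rfl⟩
    exact ⟨i, j, hij, rfl⟩

theorem degreeFiltration_zero
    (hb : ∀ ij : Fin p × Fin p, b ij = x ^ (ij.1 : ℕ) * y ^ (ij.2 : ℕ)) :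
    degreeFiltration k x y 0 = ⊤ := by
  rw [eq_top_iff, ← b.span_eq]
  refine span_le.2 ?_
  rintro _ ⟨ij, rfl⟩
  rw [hb]
  exact monomial_mem_degreeFiltration (Nat.zero_le _)

theorem repr_monomial (hx : x ^ p = 0) (hy : y ^ p = 0)
    (hb : ∀ ij : Fin p × Fin p, b ij = x ^ (ij.1 : ℕ) * y ^ (ij.2 : ℕ)) (i j : ℕ)
    (ij : Fin p × Fin p) :
    b.repr (x ^ i * y ^ j) ij = if i = ij.1 ∧ j = ij.2 then 1 else 0 := by
  by_cases h : i < p ∧ j < p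
  · rw [show x ^ i * y ^ j = b (⟨i, h.1⟩, ⟨j, h.2⟩) from (hb (⟨i, h.1⟩, ⟨j, h.2⟩)).symm,
      b.repr_self, Finsupp.single_apply]
    simp [Prod.ext_iff, Fin.ext_iff]
  · rw [monomial_eq_zero hx hy (by omega), map_zero, Finsupp.zero_apply, if_neg]
    omega

theorem repr_mul_monomial (hx : x ^ p = 0) (hy : y ^ p = 0) (hyx : y * x = q • (x * y))
    (hb : ∀ ij : Fin p × Fin p, b ij = x ^ (ij.1 : ℕ) * y ^ (ij.2 : ℕ)) (z : A) {s t : ℕ}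
    {ij kl : Fin p × Fin p} (h₁ : (kl.1 : ℕ) = ij.1 + s) (h₂ : (kl.2 : ℕ) = ij.2 + t) :
    b.repr (z * (x ^ s * y ^ t)) kl = q ^ (s * ij.2) * b.repr z ij := by
  have hcoord : (b.coord kl).comp (LinearMap.mulRight k (x ^ s * y ^ t)) =
      q ^ (s * ij.2) • b.coord ij := by
    refine b.ext fun uv => ?_
    simp only [LinearMap.comp_apply, LinearMap.mulRight_apply, LinearMap.smul_apply,
      Module.Basis.coord_apply, hb uv, monomial_mul_monomial hyx,
      map_smul, repr_monomial hx hy hb, smul_eq_mul]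
    split_ifs with hkl hij hij
    · rw [hij.2]
    · omega
    · omega
    · simp only [mul_zero]
  exact LinearMap.congr_fun hcoord z

theorem repr_monomial_mul (hx : x ^ p = 0) (hy : y ^ p = 0) (hyx : y * x = q • (x * y))
    (hb : ∀ ij : Fin p × Fin p, b ij = x ^ (ij.1 : ℕ) * y ^ (ij.2 : ℕ)) (z : A) {s t : ℕ}
    {ij kl : Fin p × Fin p} (h₁ : (kl.1 : ℕ) = s + ij.1) (h₂ : (kl.2 : ℕ) = t + ij.2) :
    b.repr (x ^ s * y ^ t * z) kl = q ^ (ij.1 * t) * b.repr z ij := by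
  have hcoord : (b.coord kl).comp (LinearMap.mulLeft k (x ^ s * y ^ t)) =
      q ^ (ij.1 * t) • b.coord ij := by
    refine b.ext fun uv => ?_
    simp only [LinearMap.comp_apply, LinearMap.mulLeft_apply, LinearMap.smul_apply,
      Module.Basis.coord_apply, hb uv, monomial_mul_monomial hyx,
      map_smul, repr_monomial hx hy hb, smul_eq_mul]
    split_ifs with hkl hij hij
    · rw [hij.1]
    · omega
    · omega
    · simp only [mul_zero]
  exact LinearMap.congr_fun hcoord z

theorem adjoin_eq_top (hb : ∀ ij : Fin p × Fin p, b ij = x ^ (ij.1 : ℕ) * y ^ (ij.2 : ℕ)) :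
    Algebra.adjoin k {x, y} = ⊤ := by
  refine eq_top_iff.2 fun a _ => ?_
  have : span k (Set.range b) ≤ Subalgebra.toSubmodule (Algebra.adjoin k {x, y}) := by
    refine span_le.2 ?_
    rintro _ ⟨ij, rfl⟩
    rw [hb, SetLike.mem_coe, Subalgebra.mem_toSubmodule]
    exact mul_mem (pow_mem (Algebra.subset_adjoin (by simp)) _)
      (pow_mem (Algebra.subset_adjoin (by simp)) _)
  exact this (b.mem_span a)

theorem mem_center_of_commute
    (hb : ∀ ij : Fin p × Fin p, b ij = x ^ (ij.1 : ℕ) * y ^ (ij.2 : ℕ))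
    {z : A} (hxz : Commute x z) (hyz : Commute y z) : z ∈ Subalgebra.center k A := by
  have h := Algebra.adjoin_le_centralizer_centralizer k ({x, y} : Set A)
  rw [adjoin_eq_top hb] at h
  have hz : z ∈ Subalgebra.centralizer k ({x, y} : Set A) := by
    rw [Subalgebra.mem_centralizer_iff]
    rintro g (rfl | rfl)
    exacts [hxz.eq, hyz.eq]
  exact Subalgebra.mem_center_iff.2 fun a => (h Algebra.mem_top z hz).symm

theorem monomial_mem_center (hx : x ^ p = 0) (hy : y ^ p = 0) (hyx : y * x = q • (x * y))
    (hb : ∀ ij : Fin p × Fin p, b ij = x ^ (ij.1 : ℕ) * y ^ (ij.2 : ℕ)) {e : ℕ}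
    (hqe : q ^ e = 1) {i j : ℕ} (hi : e ∣ i ∨ p ≤ j + 1) (hj : e ∣ j ∨ p ≤ i + 1) :
    x ^ i * y ^ j ∈ Subalgebra.center k A := by
  refine mem_center_of_commute hb ?_ ?_
  · have h := monomial_mul_monomial hyx i j 1 0
    rw [pow_one, pow_zero, mul_one, one_mul, add_zero] at h
    rw [Commute, SemiconjBy, ← mul_assoc, ← pow_succ', h]
    rcases hj with ⟨c, rfl⟩ | h
    · rw [pow_mul q, hqe, one_pow, one_smul]
    · rw [monomial_eq_zero hx hy (Or.inl h), smul_zero]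
  · have h := monomial_mul_monomial hyx 0 1 i j
    rw [pow_one, pow_zero, one_mul, mul_one, zero_add, add_comm 1] at h
    rw [Commute, SemiconjBy, h, mul_assoc, ← pow_succ]
    rcases hi with ⟨c, rfl⟩ | h
    · rw [pow_mul q, hqe, one_pow, one_smul]
    · rw [monomial_eq_zero hx hy (Or.inr h), smul_zero]

theorem image_basis_socleIndices (hp : 0 < p)
    (hb : ∀ ij : Fin p × Fin p, b ij = x ^ (ij.1 : ℕ) * y ^ (ij.2 : ℕ)) (e : ℕ) :
    b '' socleIndices p e = {a | ∃ i : ℕ, p - e ≤ i ∧ i ≤ p - 1 ∧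
      (a = x ^ i * y ^ (p - 1) ∨ a = x ^ (p - 1) * y ^ i)} := by
  refine (image_basis_setOf hb fun i j =>
    (p - e ≤ i ∧ j = p - 1) ∨ (i = p - 1 ∧ p - e ≤ j)).trans ?_
  ext a
  constructor
  · rintro ⟨i, j, hi, hj, ⟨hie, rfl⟩ | ⟨rfl, hje⟩, rfl⟩
    · exact ⟨i, hie, by omega, .inl rfl⟩
    · exact ⟨j, hje, by omega, .inr rfl⟩
  · rintro ⟨i, hie, hip, rfl | rfl⟩
    · exact ⟨i, p - 1, by omega, by omega, .inl ⟨hie, rfl⟩, rfl⟩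
    · exact ⟨p - 1, i, by omega, by omega, .inr ⟨rfl, hie⟩, rfl⟩

end Basis

end CommRing

section Field

variable [Field k] [Algebra k A] {q : k} {b : Module.Basis (Fin p × Fin p) k A}

theorem mem_jacobson_of_mem_degreeFiltration_one (hx : x ^ p = 0) (hy : y ^ p = 0)
    (hyx : y * x = q • (x * y))
    (hb : ∀ ij : Fin p × Fin p, b ij = x ^ (ij.1 : ℕ) * y ^ (ij.2 : ℕ)) {z : A}
    (hz : z ∈ degreeFiltration k x y 1) : z ∈ Ideal.jacobson (⊥ : Ideal A) := by
  refine Ideal.mem_jacobson_bot_of_isNilpotent_mul fun a => ?_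
  have ha : a ∈ degreeFiltration k x y 0 := degreeFiltration_zero hb ▸ mem_top
  exact isNilpotent_of_mem_degreeFiltration_one hx hy hyx
    (by simpa using degreeFiltration_mul_le hyx 0 1 (mul_mem_mul ha hz))

theorem mem_jacobson_bot_iff (hp : 0 < p) (hx : x ^ p = 0) (hy : y ^ p = 0)
    (hyx : y * x = q • (x * y))
    (hb : ∀ ij : Fin p × Fin p, b ij = x ^ (ij.1 : ℕ) * y ^ (ij.2 : ℕ)) {z : A} :
    z ∈ Ideal.jacobson (⊥ : Ideal A) ↔ z ∈ degreeFiltration k x y 1 := by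
  refine ⟨fun hz => ?_, mem_jacobson_of_mem_degreeFiltration_one hx hy hyx hb⟩
  set o : Fin p × Fin p := (⟨0, hp⟩, ⟨0, hp⟩)
  have h1 : b.repr 1 o = 1 := by simpa [o] using repr_monomial hx hy hb 0 0 o
  set c := b.repr z o
  have hw : z - c • 1 ∈ degreeFiltration k x y 1 := by
    rw [degreeFiltration_eq_span_image hx hy hb, Module.Basis.mem_span_image]
    intro ij hij
    by_contra hlt
    obtain rfl : ij = o := by
      simp only [Set.mem_ofPred_eq, not_le, Nat.lt_one_iff, Nat.add_eq_zero_iff] at hlt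
      ext <;> simp [o, hlt.1, hlt.2]
    simp [c, h1] at hij
  have hc : c = 0 := by
    by_contra hc
    have hone : (1 : A) ∈ Ideal.jacobson (⊥ : Ideal A) := by
      have := sub_mem hz (mem_jacobson_of_mem_degreeFiltration_one hx hy hyx hb hw)
      rw [sub_sub_cancel] at this
      simpa [hc] using Submodule.smul_of_tower_mem _ c⁻¹ this
    have h10 : (1 : A) = 0 := Ideal.mem_bot.1 <| (Ideal.eq_top_iff_one _).1 <|
      Ideal.jacobson_eq_top_iff.1 ((Ideal.eq_top_iff_one _).2 hone)
    simp [h10] at h1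
  simpa [hc] using hw

theorem basis_mem_center (hx : x ^ p = 0) (hy : y ^ p = 0) (hyx : y * x = q • (x * y))
    (hb : ∀ ij : Fin p × Fin p, b ij = x ^ (ij.1 : ℕ) * y ^ (ij.2 : ℕ)) {e : ℕ}
    (hqe : q ^ e = 1) (hediv : e ∣ p - 1) {ij : Fin p × Fin p} (hij : ij ∈ centerIndices p e) :
    b ij ∈ Subalgebra.center k A := by
  have := ij.1.pos
  rw [hb]
  rcases hij with ⟨hi, hj⟩ | hi | hj
  · exact monomial_mem_center hx hy hyx hb hqe (.inl hi) (.inl hj)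
  · exact monomial_mem_center hx hy hyx hb hqe (.inl (hi ▸ hediv)) (.inr (by omega))
  · exact monomial_mem_center hx hy hyx hb hqe (.inr (by omega)) (.inl (hj ▸ hediv))

theorem repr_eq_zero_of_mem_center (hx : x ^ p = 0) (hy : y ^ p = 0) (hyx : y * x = q • (x * y))
    (hb : ∀ ij : Fin p × Fin p, b ij = x ^ (ij.1 : ℕ) * y ^ (ij.2 : ℕ)) {e : ℕ}
    (hq : orderOf q = e) {z : A} (hz : z ∈ Subalgebra.center k A) {ij : Fin p × Fin p}
    (hij : ij ∉ centerIndices p e) : b.repr z ij = 0 := by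
  simp only [centerIndices, Set.mem_ofPred_eq, not_or, not_and_or] at hij
  obtain ⟨hdvd, hi, hj⟩ := hij
  have hcomm := Subalgebra.mem_center_iff.1 hz
  -- compare the coefficients of `g * z = z * g` at `ij + deg g`, for `g = y` resp. `g = x`
  have hcancel : ∀ n, ¬ e ∣ n → q ^ n * b.repr z ij = b.repr z ij → b.repr z ij = 0 := by
    intro n hn h
    by_contra hc
    exact hn (hq ▸ orderOf_dvd_of_pow_eq_one (mul_eq_right₀ hc |>.1 h))
  rcases hdvd with hi' | hj'
  · refine hcancel ij.1 hi' ?_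
    set kl : Fin p × Fin p := (ij.1, ⟨ij.2 + 1, by omega⟩)
    have hL := repr_monomial_mul hx hy hyx hb z (s := 0) (t := 1) (ij := ij) (kl := kl)
      (by simp [kl]) (by simp [kl, add_comm])
    have hR := repr_mul_monomial hx hy hyx hb z (s := 0) (t := 1) (ij := ij) (kl := kl)
      (by simp [kl]) rfl
    simp only [pow_zero, one_mul, pow_one, mul_one, zero_mul] at hL hR
    rw [← hL, ← hR, hcomm]
  · refine hcancel ij.2 hj' ?_
    set kl : Fin p × Fin p := (⟨ij.1 + 1, by omega⟩, ij.2)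
    have hL := repr_monomial_mul hx hy hyx hb z (s := 1) (t := 0) (ij := ij) (kl := kl)
      (by simp [kl, add_comm]) (by simp [kl])
    have hR := repr_mul_monomial hx hy hyx hb z (s := 1) (t := 0) (ij := ij) (kl := kl)
      rfl (by simp [kl])
    simp only [pow_zero, one_mul, pow_one, mul_one, mul_zero] at hL hR
    rw [← hR, ← hL, hcomm]

theorem center_eq_span (hx : x ^ p = 0) (hy : y ^ p = 0) (hyx : y * x = q • (x * y))
    (hb : ∀ ij : Fin p × Fin p, b ij = x ^ (ij.1 : ℕ) * y ^ (ij.2 : ℕ)) {e : ℕ}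
    (hq : orderOf q = e) (hediv : e ∣ p - 1) :
    Subalgebra.toSubmodule (Subalgebra.center k A) = span k (b '' centerIndices p e) := by
  refine le_antisymm (fun z hz => ?_) (span_le.2 ?_)
  · rw [Module.Basis.mem_span_image]
    intro ij hij
    by_contra h
    exact (Finsupp.mem_support_iff.1 hij) (repr_eq_zero_of_mem_center hx hy hyx hb hq hz h)
  · rintro _ ⟨ij, hij, rfl⟩
    exact basis_mem_center hx hy hyx hb (hq ▸ pow_orderOf_eq_one q) hediv hij

theorem mem_degreeFiltration_of_mem_center_of_mem_jacobson (hp : 0 < p) (hx : x ^ p = 0)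
    (hy : y ^ p = 0) (hyx : y * x = q • (x * y))
    (hb : ∀ ij : Fin p × Fin p, b ij = x ^ (ij.1 : ℕ) * y ^ (ij.2 : ℕ)) {e : ℕ}
    (hq : orderOf q = e) (hediv : e ∣ p - 1) {z : A} (hzZ : z ∈ Subalgebra.center k A)
    (hzJ : z ∈ Ideal.jacobson (⊥ : Ideal A)) : z ∈ degreeFiltration k x y e := by
  rw [mem_jacobson_bot_iff hp hx hy hyx hb, degreeFiltration_eq_span_image hx hy hb,
    Module.Basis.mem_span_image] at hzJ
  have hzZ' : z ∈ span k (b '' centerIndices p e) := center_eq_span hx hy hyx hb hq hediv ▸ hzZ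
  rw [Module.Basis.mem_span_image] at hzZ'
  rw [degreeFiltration_eq_span_image hx hy hb, Module.Basis.mem_span_image]
  intro ij hij
  have h1 : 1 ≤ (ij.1 : ℕ) + ij.2 := hzJ hij
  have hi := ij.1.isLt
  have hj := ij.2.isLt
  show e ≤ (ij.1 : ℕ) + ij.2
  rcases hzZ' hij with ⟨hei, hej⟩ | h | h
  · rcases Nat.eq_zero_or_pos (ij.1 : ℕ) with h0 | hpos
    · have := Nat.le_of_dvd (by omega) hej
      omega
    · have := Nat.le_of_dvd hpos hei
      omega
  · have := Nat.le_of_dvd (by omega) hediv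
    omega
  · have := Nat.le_of_dvd (by omega) hediv
    omega

theorem repr_eq_zero_of_mul_monomial_eq_zero (hx : x ^ p = 0) (hy : y ^ p = 0)
    (hyx : y * x = q • (x * y))
    (hb : ∀ ij : Fin p × Fin p, b ij = x ^ (ij.1 : ℕ) * y ^ (ij.2 : ℕ)) (hq : q ≠ 0)
    {z : A} {s t : ℕ} (hz : z * (x ^ s * y ^ t) = 0) {ij : Fin p × Fin p}
    (hi : ij.1 + s < p) (hj : ij.2 + t < p) : b.repr z ij = 0 := by
  have h := repr_mul_monomial hx hy hyx hb z (ij := ij) (kl := (⟨_, hi⟩, ⟨_, hj⟩)) rfl rfl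
  rw [hz, map_zero, Finsupp.zero_apply, eq_comm, mul_eq_zero] at h
  exact h.resolve_left (pow_ne_zero _ hq)

theorem socCenter_eq_span (hp : 0 < p) (hx : x ^ p = 0) (hy : y ^ p = 0)
    (hyx : y * x = q • (x * y))
    (hb : ∀ ij : Fin p × Fin p, b ij = x ^ (ij.1 : ℕ) * y ^ (ij.2 : ℕ)) {e : ℕ}
    (hq : orderOf q = e) (he : 0 < e) (hediv : e ∣ p - 1) :
    socCenter k A = span k (b '' socleIndices p e) := by
  refine le_antisymm (fun z hz => ?_) (span_le.2 ?_)
  · obtain ⟨hzZ, hzann⟩ := hz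
    have hq0 : q ≠ 0 := by
      rintro rfl
      simp at hq
      omega
    have hqe : q ^ e = 1 := hq ▸ pow_orderOf_eq_one q
    have hann : ∀ {s t : ℕ}, e ∣ s → e ∣ t → 1 ≤ s + t → z * (x ^ s * y ^ t) = 0 :=
      fun hs ht hst => hzann _ (monomial_mem_center hx hy hyx hb hqe (.inl hs) (.inl ht))
        (mem_jacobson_of_mem_degreeFiltration_one hx hy hyx hb
          (monomial_mem_degreeFiltration hst))
    rw [Module.Basis.mem_span_image]
    intro ij hij
    rw [SetLike.mem_coe, Finsupp.mem_support_iff] at hij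
    have hT1 : ij ∈ centerIndices p e := by
      by_contra h
      exact hij (repr_eq_zero_of_mem_center hx hy hyx hb hq hzZ h)
    have hi : p ≤ ij.1 + e := by
      by_contra h
      exact hij (repr_eq_zero_of_mul_monomial_eq_zero hx hy hyx hb hq0
        (hann dvd_rfl (dvd_zero e) (by omega)) (by omega) (by omega))
    have hj : p ≤ ij.2 + e := by
      by_contra h
      exact hij (repr_eq_zero_of_mul_monomial_eq_zero hx hy hyx hb hq0
        (hann (dvd_zero e) dvd_rfl (by omega)) (by omega) (by omega))
    have hi' := ij.1.isLt
    have hj' := ij.2.isLt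
    rcases hT1 with ⟨hei, -⟩ | h | h
    · -- a multiple of `e` in `[p - e, p - 1]` is `p - 1`, as `e ∣ p - 1`
      have := Nat.eq_zero_of_dvd_of_lt (Nat.dvd_sub hediv hei) (by omega)
      exact .inr ⟨by omega, by omega⟩
    · exact .inr ⟨h, by omega⟩
    · exact .inl ⟨by omega, h⟩
  · rintro _ ⟨ij, hij, rfl⟩
    have hT1 : ij ∈ centerIndices p e := by
      rcases hij with ⟨-, h⟩ | ⟨h, -⟩
      exacts [.inr (.inr h), .inr (.inl h)]
    refine ⟨basis_mem_center hx hy hyx hb (hq ▸ pow_orderOf_eq_one q) hediv hT1,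
      fun m hmZ hmJ => ?_⟩
    have hm := mem_degreeFiltration_of_mem_center_of_mem_jacobson hp hx hy hyx hb hq hediv hmZ hmJ
    have hbij : b ij ∈ degreeFiltration k x y (ij.1 + ij.2) :=
      hb ij ▸ monomial_mem_degreeFiltration le_rfl
    have := degreeFiltration_mul_le hyx _ _ (mul_mem_mul hbij hm)
    rwa [degreeFiltration_eq_bot hx hy (by rcases hij with h | h <;> omega), mem_bot] at this

end Field

theorem ncard_setOf_fin_prod (P : ℕ → ℕ → Prop) :
    {ij : Fin p × Fin p | P ij.1 ij.2}.ncard =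
      {ij : ℕ × ℕ | ij.1 < p ∧ ij.2 < p ∧ P ij.1 ij.2}.ncard := by
  rw [← Set.ncard_image_of_injective _ (Fin.val_injective.prodMap Fin.val_injective)]
  congr 1
  ext ⟨i, j⟩
  constructor
  · rintro ⟨⟨u, v⟩, huv, h⟩
    simp only [Prod.map, Prod.mk.injEq] at h
    obtain ⟨rfl, rfl⟩ := h
    exact ⟨u.isLt, v.isLt, huv⟩
  · rintro ⟨hi, hj, hij⟩
    exact ⟨(⟨i, hi⟩, ⟨j, hj⟩), hij, rfl⟩

open Finset in
theorem ncard_centerIndices {e : ℕ} (hp : 0 < p) (he : 0 < e) (hediv : e ∣ p - 1) :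
    (centerIndices p e).ncard = ((p - 1) / e) ^ 2 + 2 * p - 1 := by
  classical
  set Q := {i ∈ range (p - 1) | e ∣ i}
  have hset : {ij : ℕ × ℕ | ij.1 < p ∧ ij.2 < p ∧
      ((e ∣ ij.1 ∧ e ∣ ij.2) ∨ ij.1 = p - 1 ∨ ij.2 = p - 1)} =
      ↑(Q ×ˢ Q ∪ (range p ×ˢ {p - 1} ∪ {p - 1} ×ˢ range p)) := by
    ext ⟨i, j⟩
    simp only [Q, Set.mem_ofPred_eq, coe_union, coe_product, coe_filter, coe_range,
      coe_singleton, Set.mem_union, Set.mem_prod, Set.mem_Iio, Set.mem_singleton_iff, mem_range]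
    constructor
    · rintro ⟨hi, hj, ⟨hei, hej⟩ | h | h⟩
      · by_cases hi' : i = p - 1
        · exact .inr (.inr ⟨hi', hj⟩)
        by_cases hj' : j = p - 1
        · exact .inr (.inl ⟨hi, hj'⟩)
        exact .inl ⟨⟨by omega, hei⟩, by omega, hej⟩
      · exact .inr (.inr ⟨h, hj⟩)
      · exact .inr (.inl ⟨hi, h⟩)
    · rintro (⟨⟨hi, hei⟩, hj, hej⟩ | ⟨hi, hj⟩ | ⟨hi, hj⟩)
      · exact ⟨by omega, by omega, .inl ⟨hei, hej⟩⟩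
      · exact ⟨hi, by omega, .inr (.inr hj)⟩
      · exact ⟨by omega, hj, .inr (.inl hi)⟩
  have hdisj : Disjoint (Q ×ˢ Q) (range p ×ˢ {p - 1} ∪ {p - 1} ×ˢ range p) := by
    rw [disjoint_left]
    rintro ⟨i, j⟩ h1 h2
    simp only [Q, mem_product, mem_filter, mem_range, mem_union, mem_singleton] at h1 h2
    omega
  refine (ncard_setOf_fin_prod fun i j =>
    (e ∣ i ∧ e ∣ j) ∨ i = p - 1 ∨ j = p - 1).trans ?_
  rw [hset, Set.ncard_coe_finset, card_union_of_disjoint hdisj, card_product,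
    Nat.card_filter_dvd_range he hediv,
    card_product_singleton_union_singleton_product (mem_range.2 (by omega)), card_range, sq]
  omega

open Finset in
theorem ncard_socleIndices {e : ℕ} (he : 0 < e) (hep : e ≤ p) :
    (socleIndices p e).ncard = 2 * e - 1 := by
  have hset : {ij : ℕ × ℕ | ij.1 < p ∧ ij.2 < p ∧
      ((p - e ≤ ij.1 ∧ ij.2 = p - 1) ∨ (ij.1 = p - 1 ∧ p - e ≤ ij.2))} =
      ↑(Ico (p - e) p ×ˢ {p - 1} ∪ {p - 1} ×ˢ Ico (p - e) p) := by
    ext ⟨i, j⟩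
    simp only [Set.mem_ofPred_eq, coe_union, coe_product, coe_Ico, coe_singleton, Set.mem_union,
      Set.mem_prod, Set.mem_Ico, Set.mem_singleton_iff]
    omega
  refine (ncard_setOf_fin_prod fun i j =>
    (p - e ≤ i ∧ j = p - 1) ∨ (i = p - 1 ∧ p - e ≤ j)).trans ?_
  rw [hset, Set.ncard_coe_finset,
    card_product_singleton_union_singleton_product (mem_Ico.2 ⟨by omega, by omega⟩),
    Nat.card_Ico, Nat.sub_sub_self hep]

end QuantumCompleteIntersection

open QuantumCompleteIntersection

theorem center_of_quantum_complete_intersection_general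
    (k : Type*) [Field k] (p e : ℕ) (q : k)
    (hp : p.Prime)
    (hq : orderOf q = e) (hediv : e ∣ p - 1)
    (A : Type*) [Ring A] [Algebra k A] (x y : A)
    (hx : x ^ p = 0) (hy : y ^ p = 0) (hyx : y * x = q • (x * y))
    (b : Module.Basis (Fin p × Fin p) k A)
    (hb : ∀ ij : Fin p × Fin p, b ij = x ^ (ij.1 : ℕ) * y ^ (ij.2 : ℕ)) :
    (LinearIndependent k (fun a : ↥{a : A | ∃ i j : ℕ, i < p ∧ j < p ∧
        ((e ∣ i ∧ e ∣ j) ∨ i = p - 1 ∨ j = p - 1) ∧ a = x ^ i * y ^ j} => (a : A)) ∧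
      Submodule.span k {a : A | ∃ i j : ℕ, i < p ∧ j < p ∧
        ((e ∣ i ∧ e ∣ j) ∨ i = p - 1 ∨ j = p - 1) ∧ a = x ^ i * y ^ j} =
        Subalgebra.toSubmodule (Subalgebra.center k A) ∧
      Module.finrank k ↥(Subalgebra.center k A) = ((p - 1) / e) ^ 2 + 2 * p - 1) ∧
    (LinearIndependent k (fun a : ↥{a : A | ∃ i : ℕ, p - e ≤ i ∧ i ≤ p - 1 ∧
        (a = x ^ i * y ^ (p - 1) ∨ a = x ^ (p - 1) * y ^ i)} => (a : A)) ∧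
      Submodule.span k {a : A | ∃ i : ℕ, p - e ≤ i ∧ i ≤ p - 1 ∧
        (a = x ^ i * y ^ (p - 1) ∨ a = x ^ (p - 1) * y ^ i)} = socCenter k A ∧
      Module.finrank k ↥(socCenter k A) = 2 * e - 1) ∧
    (∀ z : A, z ∈ Ideal.jacobson (⊥ : Ideal A) → z ∈ Subalgebra.center k A →
      z ∈ ((Submodule.restrictScalars k (Ideal.jacobson (⊥ : Ideal A))) ^ e :
        Submodule k A)) := by
  have hp0 := hp.pos
  have he : 0 < e := Nat.pos_of_dvd_of_pos hediv (by have := hp.two_le; omega)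
  have hep : e ≤ p := (Nat.le_of_dvd (by have := hp.two_le; omega) hediv).trans (Nat.sub_le p 1)
  rw [← image_basis_setOf hb fun i j => (e ∣ i ∧ e ∣ j) ∨ i = p - 1 ∨ j = p - 1,
    ← image_basis_socleIndices hp0 hb e]
  refine ⟨⟨(b.linearIndependent.linearIndepOn _).id_image,
      (center_eq_span hx hy hyx hb hq hediv).symm, ?_⟩,
    ⟨(b.linearIndependent.linearIndepOn _).id_image,
      (socCenter_eq_span hp0 hx hy hyx hb hq he hediv).symm, ?_⟩, fun z hzJ hzZ => ?_⟩
  · rw [← Subalgebra.finrank_toSubmodule, center_eq_span hx hy hyx hb hq hediv,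
      b.finrank_span_image, ncard_centerIndices hp0 he hediv]
  · rw [socCenter_eq_span hp0 hx hy hyx hb hq he hediv, b.finrank_span_image,
      ncard_socleIndices he hep]
  · have hJ : degreeFiltration k x y 1 ≤ (Ideal.jacobson (⊥ : Ideal A)).restrictScalars k :=
      fun w => mem_jacobson_of_mem_degreeFiltration_one hx hy hyx hb
    exact pow_le_pow_left' hJ e <| degreeFiltration_le_one_pow he.ne' <|
      mem_degreeFiltration_of_mem_center_of_mem_jacobson hp0 hx hy hyx hb hq hediv hzZ hzJ

/-- Lemma (the center of the quantum complete intersection):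
(i) the monomials `x^i y^j` with (`e ∣ i` and `e ∣ j`) or `i = p−1` or `j = p−1` form a
`k`-basis of `Z(A)`, so `dim_k Z(A) = ((p−1)/e)² + 2p − 1`;
(ii) the monomials `x^i y^{p−1}`, `x^{p−1} y^j` with `p−e ≤ i, j ≤ p−1` form a `k`-basis
of `soc(Z(A))`, so `dim_k soc(Z(A)) = 2e − 1`;
(iii) `J(A) ∩ Z(A) ⊆ J(A)^e`. -/
theorem center_of_quantum_complete_intersection
    (k : Type*) [Field k] (p e : ℕ) (q : k)
    (hp : p.Prime) (hodd : Odd p) (hchar : CharP k p)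
    (hq : orderOf q = e) (he : 2 ≤ e) (hediv : e ∣ p - 1)
    (A : Type*) [Ring A] [Algebra k A] (x y : A)
    (hx : x ^ p = 0) (hy : y ^ p = 0) (hyx : y * x = q • (x * y))
    (b : Module.Basis (Fin p × Fin p) k A)
    (hb : ∀ ij : Fin p × Fin p, b ij = x ^ (ij.1 : ℕ) * y ^ (ij.2 : ℕ)) :
    (LinearIndependent k (fun a : ↥{a : A | ∃ i j : ℕ, i < p ∧ j < p ∧
        ((e ∣ i ∧ e ∣ j) ∨ i = p - 1 ∨ j = p - 1) ∧ a = x ^ i * y ^ j} => (a : A)) ∧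
      Submodule.span k {a : A | ∃ i j : ℕ, i < p ∧ j < p ∧
        ((e ∣ i ∧ e ∣ j) ∨ i = p - 1 ∨ j = p - 1) ∧ a = x ^ i * y ^ j} =
        Subalgebra.toSubmodule (Subalgebra.center k A) ∧
      Module.finrank k ↥(Subalgebra.center k A) = ((p - 1) / e) ^ 2 + 2 * p - 1) ∧
    (LinearIndependent k (fun a : ↥{a : A | ∃ i : ℕ, p - e ≤ i ∧ i ≤ p - 1 ∧
        (a = x ^ i * y ^ (p - 1) ∨ a = x ^ (p - 1) * y ^ i)} => (a : A)) ∧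
      Submodule.span k {a : A | ∃ i : ℕ, p - e ≤ i ∧ i ≤ p - 1 ∧
        (a = x ^ i * y ^ (p - 1) ∨ a = x ^ (p - 1) * y ^ i)} = socCenter k A ∧
      Module.finrank k ↥(socCenter k A) = 2 * e - 1) ∧
    (∀ z : A, z ∈ Ideal.jacobson (⊥ : Ideal A) → z ∈ Subalgebra.center k A →
      z ∈ ((Submodule.restrictScalars k (Ideal.jacobson (⊥ : Ideal A))) ^ e :
        Submodule k A)) :=
  center_of_quantum_complete_intersection_general k p e q hp hq hediv A x y hx hy hyx b hb
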